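/- arXiv:1801.07363 — 6 statements merged into one kernel-verified Lean document; each statement's English description precedes it below -/
import Mathlib

section
/- Let T be a tree (a connected acyclic finite simple graph) with vertex v, let v_1, …, v_k be the vertices of T adjacent to v, and for each 1 ≤ i ≤ k let T_i be the connected component of the graph obtained from T by deleting the edge {v, v_i} that contains v_i (viewed as an induced subgraph of T). Then for every color c ∈ ℕ, one has the identity of formal power series Z_T^v(c) = x_c · Π_{i=1}^k ( X_{T_i} − Z_{T_i}^{v_i}(c) ) in MvPowerSeries ℕ ℤ. -/
/-- A proper coloring of a simple graph by natural-number colors: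
adjacent vertices receive distinct colors. -/
def SimpleGraph.IsProperNatColoring {V : Type} (G : SimpleGraph V) (κ : V → ℕ) : Prop :=
  ∀ ⦃u w : V⦄, G.Adj u w → κ u ≠ κ w

/-- The chromatic symmetric function of `G`, as a formal power series in the
variables `(x_c)_{c : ℕ}` with integer coefficients: the coefficient on the
exponent vector `d : ℕ →₀ ℕ` is the number of proper colorings `κ` of `G`
with `|κ⁻¹(c)| = d c` for every color `c`. -/
noncomputable def csf {V : Type} (G : SimpleGraph V) : MvPowerSeries ℕ ℤ :=
  fun d => ((Set.ncard {κ : V → ℕ |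
    G.IsProperNatColoring κ ∧ ∀ c : ℕ, (κ ⁻¹' {c}).ncard = d c} : ℕ) : ℤ)

/-- `Zcsf G v c` is the part of the chromatic symmetric function of `G`
counting only the proper colorings `κ` with `κ v = c`. -/
noncomputable def Zcsf {V : Type} (G : SimpleGraph V) (v : V) (c : ℕ) : MvPowerSeries ℕ ℤ :=
  fun d => ((Set.ncard {κ : V → ℕ |
    G.IsProperNatColoring κ ∧ κ v = c ∧ ∀ c' : ℕ, (κ ⁻¹' {c'}).ncard = d c'} : ℕ) : ℤ)

/-- `branchSet T v u` is the vertex set of the connected component containing `u`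
of the graph obtained from `T` by deleting the edge `{v, u}`. -/
def branchSet {V : Type} (T : SimpleGraph V) (v u : V) : Set V :=
  {w : V | (T.deleteEdges {s(v, u)}).Reachable w u}

/-!
Removing `v` splits the tree into the branches `T_u`, one for each neighbor `u` of `v`, and every
edge of `T` either joins `v` to some `u` or lies inside a single branch. Hence a proper coloring
of `T` with `κ v = c` is the same thing as a family of proper colorings of the branches, the one
of `T_u` avoiding `c` at `u`. Generating functions of colorings are multiplicative along such
decompositions of the vertex set (`Option` for `v`, a `Σ`-type for the branches); the vertex `v`
contributes `x_c`, and the colorings of `T_u` avoiding `c` at `u` are counted by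
`X_{T_u} - Z_{T_u}^u(c)`.
-/

open Finset

section ColorCount

variable {S S' σ : Type*} [Fintype S] [Fintype S']

noncomputable def colorCount (κ : S → σ) : σ →₀ ℕ := ∑ x, Finsupp.single (κ x) 1

lemma colorCount_apply (κ : S → σ) (c : σ) : colorCount κ c = (κ ⁻¹' {c}).ncard := by
  classical
  rw [colorCount, Finsupp.finsetSum_apply, Set.ncard_eq_toFinset_card']
  simp [Finsupp.single_apply, eq_comm]

lemma colorCount_eq_iff (κ : S → σ) (d : σ →₀ ℕ) :
    colorCount κ = d ↔ ∀ c, (κ ⁻¹' {c}).ncard = d c := by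
  simp only [← colorCount_apply, Finsupp.ext_iff]

lemma single_le_colorCount (κ : S → σ) (x : S) : Finsupp.single (κ x) 1 ≤ colorCount κ :=
  Finset.single_le_sum (f := fun x => Finsupp.single (κ x) 1) (fun _ _ => zero_le)
    (Finset.mem_univ x)

lemma colorCount_comp_equiv (e : S ≃ S') (κ : S' → σ) : colorCount (κ ∘ e) = colorCount κ :=
  e.sum_comp fun x => Finsupp.single (κ x) 1

lemma colorCount_option (κ : Option S → σ) :
    colorCount κ = Finsupp.single (κ none) 1 + colorCount (κ ∘ some) :=
  Fintype.sum_option _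

lemma colorCount_sigma {ι : Type*} [Fintype ι] {T : ι → Type*} [∀ i, Fintype (T i)]
    (κ : (Σ i, T i) → σ) : colorCount κ = ∑ i, colorCount fun x => κ ⟨i, x⟩ :=
  Fintype.sum_sigma _

lemma finite_setOf_colorCount_eq (d : σ →₀ ℕ) : {κ : S → σ | colorCount κ = d}.Finite := by
  refine (Set.Finite.pi (t := fun _ : S => (d.support : Set σ))
    fun _ => d.support.finite_toSet).subset fun κ hκ x _ => ?_
  have := single_le_colorCount κ x (κ x)
  simp only [Set.mem_ofPred_eq.mp hκ, Finsupp.single_eq_same] at this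
  exact Finsupp.mem_support_iff.mpr (by omega)

end ColorCount

section ColorGF

variable {S S' σ : Type*} [Fintype S] [Fintype S']

/-- The generating function `∑_{κ ∈ A} ∏_x x_{κ x}`, given coefficientwise since `A` is
usually infinite. -/
noncomputable def colorGF (A : Set (S → σ)) : MvPowerSeries σ ℤ :=
  fun d => ((A ∩ {κ | colorCount κ = d}).ncard : ℤ)

lemma coeff_colorGF (A : Set (S → σ)) (d : σ →₀ ℕ) :
    MvPowerSeries.coeff d (colorGF A) = (A ∩ {κ | colorCount κ = d}).ncard := rfl

lemma colorGF_inter_add_diff (A B : Set (S → σ)) :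
    colorGF (A ∩ B) + colorGF (A \ B) = colorGF A := by
  ext d
  have hfin := finite_setOf_colorCount_eq (S := S) d
  rw [map_add, coeff_colorGF, coeff_colorGF, coeff_colorGF, ← Nat.cast_add,
    ← Set.ncard_union_eq ((Set.disjoint_sdiff_inter.symm).mono Set.inter_subset_left
      Set.inter_subset_left) (hfin.inter_of_right _) (hfin.inter_of_right _),
    ← Set.union_inter_distrib_right, Set.inter_union_sdiff]

lemma colorGF_congr_equiv (e : S ≃ S') {A : Set (S' → σ)} {B : Set (S → σ)}
    (h : ∀ κ, κ ∈ A ↔ κ ∘ e ∈ B) : colorGF A = colorGF B := by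
  ext d
  rw [coeff_colorGF, coeff_colorGF]
  congr 1
  refine Set.ncard_congr (fun κ _ => κ ∘ e) (fun κ hκ => ⟨(h κ).1 hκ.1, ?_⟩)
    (fun κ κ' _ _ hκκ' => e.surjective.injective_comp_right hκκ') (fun κ hκ => ?_)
  · rw [Set.mem_ofPred_eq, colorCount_comp_equiv]; exact hκ.2
  · have hκe : κ ∘ e.symm ∘ e = κ := by ext; simp
    refine ⟨κ ∘ e.symm, ⟨(h _).2 (by rw [Function.comp_assoc, hκe]; exact hκ.1), ?_⟩, hκe⟩
    rw [Set.mem_ofPred_eq, colorCount_comp_equiv]; exact hκ.2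

lemma colorGF_option (A : Set (S → σ)) (c : σ) :
    colorGF {κ : Option S → σ | κ none = c ∧ κ ∘ some ∈ A} = MvPowerSeries.X c * colorGF A := by
  ext d
  rw [coeff_colorGF, MvPowerSeries.X_def, MvPowerSeries.coeff_monomial_mul, coeff_colorGF]
  split_ifs with hd
  · rw [one_mul, Nat.cast_inj]
    refine Set.ncard_congr (fun κ _ => κ ∘ some) (fun κ hκ => ⟨hκ.1.2, ?_⟩)
      (fun κ κ' hκ hκ' h => ?_) (fun κ' hκ' => ⟨fun o => o.elim c κ', ⟨⟨rfl, hκ'.1⟩, ?_⟩, rfl⟩)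
    · rw [Set.mem_ofPred_eq, ← hκ.2, colorCount_option, hκ.1.1, add_tsub_cancel_left]
    · funext o
      cases o with
      | none => rw [hκ.1.1, hκ'.1.1]
      | some x => exact congrFun h x
    · rw [Set.mem_ofPred_eq, colorCount_option, Option.elim_none]
      exact (congrArg _ hκ'.2).trans (add_tsub_cancel_of_le hd)
  · suffices h : {κ : Option S → σ | κ none = c ∧ κ ∘ some ∈ A} ∩ {κ | colorCount κ = d} = ∅ by
      rw [h, Set.ncard_empty, Nat.cast_zero]
    refine Set.eq_empty_of_forall_notMem fun κ ⟨⟨hnone, _⟩, hcnt⟩ => hd ?_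
    exact hcnt ▸ hnone ▸ single_le_colorCount κ none

lemma colorGF_sigma {ι : Type*} [Fintype ι] {T : ι → Type*} [∀ i, Fintype (T i)]
    (A : ∀ i, Set (T i → σ)) :
    colorGF {κ : (Σ i, T i) → σ | ∀ i, (fun x => κ ⟨i, x⟩) ∈ A i} = ∏ i, colorGF (A i) := by
  classical
  ext d
  have hfin i e := (finite_setOf_colorCount_eq e).inter_of_right (A i)
  let B i e : Finset (T i → σ) := (hfin i e).toFinset
  have hB : ∀ i e, MvPowerSeries.coeff e (colorGF (A i)) = #(B i e) := fun i e => by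
    rw [coeff_colorGF, Set.ncard_eq_toFinset_card _ (hfin i e)]
  have hdisj : (finsuppAntidiag (univ : Finset ι) d : Set (ι →₀ σ →₀ ℕ)).PairwiseDisjoint
      fun l => Fintype.piFinset fun i => B i (l i) := by
    intro l _ l' _ hne
    refine Finset.disjoint_left.mpr fun F hF hF' => hne (Finsupp.ext fun i => ?_)
    simp only [Fintype.mem_piFinset, B, Set.Finite.mem_toFinset] at hF hF'
    exact (hF i).2.symm.trans (hF' i).2
  rw [MvPowerSeries.coeff_prod, coeff_colorGF]
  simp only [hB, ← Fintype.card_piFinset, ← Nat.cast_prod, ← Nat.cast_sum]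
  rw [← card_biUnion hdisj, ← Set.ncard_coe_finset, Nat.cast_inj]
  refine Set.ncard_congr (fun κ _ i x => κ ⟨i, x⟩) (fun κ hκ => ?_)
    (fun κ κ' _ _ h => funext fun ⟨i, x⟩ => congrFun (congrFun h i) x) (fun F hF => ?_)
  · simp only [coe_biUnion, Set.mem_iUnion, Fintype.coe_piFinset, Set.mem_pi, B,
      Set.Finite.coe_toFinset, mem_coe, mem_finsuppAntidiag]
    refine ⟨Finsupp.equivFunOnFinite.symm fun i => colorCount fun x => κ ⟨i, x⟩,
      ⟨?_, subset_univ _⟩, fun i _ => ⟨hκ.1 i, rfl⟩⟩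
    rw [← hκ.2, colorCount_sigma]
    rfl
  · simp only [coe_biUnion, Set.mem_iUnion, Fintype.coe_piFinset, Set.mem_pi, B,
      Set.Finite.coe_toFinset, mem_coe, mem_finsuppAntidiag] at hF
    obtain ⟨l, ⟨hl, -⟩, hF⟩ := hF
    refine ⟨fun p => F p.1 p.2, ⟨fun i => (hF i trivial).1, ?_⟩, rfl⟩
    rw [Set.mem_ofPred_eq, colorCount_sigma, ← hl]
    exact Finset.sum_congr rfl fun i _ => (hF i trivial).2

end ColorGF

section ChromaticSymmetricFunction

variable {W : Type} [Fintype W] (G : SimpleGraph W)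

lemma csf_eq_colorGF : csf G = colorGF {κ | G.IsProperNatColoring κ} := by
  ext d
  rw [coeff_colorGF]
  change ((Set.ncard _ : ℕ) : ℤ) = _
  simp only [colorCount_eq_iff, Set.ofPred_and]

lemma Zcsf_eq_colorGF (w : W) (c : ℕ) :
    Zcsf G w c = colorGF ({κ | G.IsProperNatColoring κ} ∩ {κ | κ w = c}) := by
  ext d
  rw [coeff_colorGF]
  change ((Set.ncard _ : ℕ) : ℤ) = _
  simp only [colorCount_eq_iff, Set.ofPred_and, Set.inter_assoc]

lemma csf_sub_Zcsf (w : W) (c : ℕ) :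
    csf G - Zcsf G w c = colorGF {κ | G.IsProperNatColoring κ ∧ κ w ≠ c} := by
  rw [csf_eq_colorGF, Zcsf_eq_colorGF, ← colorGF_inter_add_diff _ {κ | κ w = c},
    add_sub_cancel_left]
  rfl

end ChromaticSymmetricFunction

section Branches

open SimpleGraph

variable {V : Type} {T : SimpleGraph V} {v u u' w w' : V}

lemma mem_branchSet_self : u ∈ branchSet T v u := SimpleGraph.Reachable.refl u

lemma mem_branchSet_of_adj (hw : w ∈ branchSet T v u) (hwv : w ≠ v) (h : T.Adj w w')
    (hw'v : w' ≠ v) : w' ∈ branchSet T v u := by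
  have hadj : (T.deleteEdges {s(v, u)}).Adj w' w := by
    refine deleteEdges_adj.mpr ⟨h.symm, fun hmem => ?_⟩
    rcases Sym2.eq_iff.mp (Set.mem_singleton_iff.mp hmem) with ⟨h1, -⟩ | ⟨-, h2⟩
    exacts [hw'v h1, hwv h2]
  exact hadj.reachable.trans hw

lemma SimpleGraph.Preconnected.exists_adj_mem_branchSet (hT : T.Preconnected) (hw : w ≠ v) :
    ∃ u, T.Adj v u ∧ w ∈ branchSet T v u := by
  obtain ⟨p⟩ := hT w v
  induction p with
  | nil => exact absurd rfl hw
  | @cons x y z h q ih =>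
    by_cases hy : y = z
    · subst hy; exact ⟨x, h.symm, mem_branchSet_self⟩
    · obtain ⟨u, hu, hyu⟩ := ih hy
      exact ⟨u, hu, mem_branchSet_of_adj hyu hy h.symm hw⟩

lemma SimpleGraph.IsTree.notMem_branchSet (hT : T.IsTree) (hu : T.Adj v u) : v ∉ branchSet T v u :=
  isBridge_iff.mp (isAcyclic_iff_forall_adj_isBridge.mp hT.isAcyclic hu)

lemma SimpleGraph.IsTree.eq_of_mem_branchSet (hT : T.IsTree) (hu : T.Adj v u) (hu' : T.Adj v u')
    (hw : w ∈ branchSet T v u) (hw' : w ∈ branchSet T v u') : u = u' := by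
  classical
  by_contra hne
  obtain ⟨p⟩ := hw
  have hvp : v ∉ p.support := fun hv => hT.notMem_branchSet hu ⟨p.dropUntil v hv⟩
  have hwu : (T.deleteEdges {s(v, u')}).Reachable w u :=
    ⟨(p.mapLe (deleteEdges_le _)).toDeleteEdge s(v, u') fun he =>
      hvp (by simpa using Walk.fst_mem_support_of_mem_edges _ he)⟩
  have hvu : (T.deleteEdges {s(v, u')}).Adj v u := by
    refine deleteEdges_adj.mpr ⟨hu, fun h => ?_⟩
    rcases Sym2.eq_iff.mp (Set.mem_singleton_iff.mp h) with ⟨-, h⟩ | ⟨-, h⟩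
    exacts [hne h, hu.ne h.symm]
  exact hT.notMem_branchSet hu' (hvu.reachable.trans (hwu.symm.trans hw'))

noncomputable def SimpleGraph.IsTree.branchEquiv (hT : T.IsTree) (v : V) :
    Option (Σ u : {u // T.Adj v u}, branchSet T v u) ≃ V :=
  Equiv.ofBijective (fun o => Option.elim o v fun p => p.2) <| by
    constructor
    · rintro (_ | ⟨⟨u, hu⟩, w, hw⟩) (_ | ⟨⟨u', hu'⟩, w', hw'⟩) h
      · rfl
      · exact absurd ((show v = w' from h) ▸ hw') (hT.notMem_branchSet hu')
      · exact absurd ((show w = v from h) ▸ hw) (hT.notMem_branchSet hu)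
      · obtain rfl : w = w' := h
        obtain rfl := hT.eq_of_mem_branchSet hu hu' hw hw'
        rfl
    · intro w
      by_cases hw : w = v
      · exact ⟨none, hw.symm⟩
      · obtain ⟨u, hu, hwu⟩ := hT.connected.preconnected.exists_adj_mem_branchSet hw
        exact ⟨some ⟨⟨u, hu⟩, w, hwu⟩, rfl⟩

lemma SimpleGraph.Preconnected.isProperNatColoring_iff_branches (hT : T.Preconnected) (v : V)
    (κ : V → ℕ) : T.IsProperNatColoring κ ↔ ∀ u, T.Adj v u →
      κ v ≠ κ u ∧ (T.induce (branchSet T v u)).IsProperNatColoring fun x => κ x := by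
  refine ⟨fun h u hu => ⟨h hu, fun x y hxy => h hxy⟩, fun h a b hab => ?_⟩
  by_cases ha : a = v
  · subst ha; exact (h b hab).1
  by_cases hb : b = v
  · subst hb; exact (h a hab.symm).1.symm
  obtain ⟨u, hu, hau⟩ := hT.exists_adj_mem_branchSet ha
  exact (h u hu).2 (show (T.induce _).Adj ⟨a, hau⟩ ⟨b, mem_branchSet_of_adj hau ha hab hb⟩ from hab)

end Branches

/-- For a tree `T` with vertex `v`, letting `T_i` be the connected component
containing the neighbor `u` of `v` in `T` minus the edge `{v, u}`, one has
`Z_T^v(c) = x_c · Π_u (X_{T_u} − Z_{T_u}^{u}(c))`, the product over neighbors `u` of `v`. -/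
theorem Zcsf_tree_decomposition {V : Type} [Fintype V]
    (T : SimpleGraph V) [DecidableRel T.Adj] (hT : T.IsTree) (v : V) (c : ℕ) :
    Zcsf T v c = (MvPowerSeries.X c : MvPowerSeries ℕ ℤ) *
      ∏ u ∈ T.neighborFinset v,
        (csf (SimpleGraph.induce (branchSet T v u) T)
          - Zcsf (SimpleGraph.induce (branchSet T v u) T)
              ⟨u, by exact SimpleGraph.Reachable.refl u⟩ c) := by
  classical
  let A (u : {u // T.Adj v u}) : Set (branchSet T v u → ℕ) :=
    {μ | (T.induce (branchSet T v u)).IsProperNatColoring μ ∧ μ ⟨u, mem_branchSet_self⟩ ≠ c}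
  have hsplit : ∀ κ : V → ℕ, κ ∈ {κ | T.IsProperNatColoring κ} ∩ {κ | κ v = c} ↔
      κ ∘ hT.branchEquiv v ∈
        {κ' | κ' none = c ∧ κ' ∘ some ∈ {F | ∀ u, (fun x => F ⟨u, x⟩) ∈ A u}} := by
    intro κ
    simp only [Set.mem_inter_iff, Set.mem_ofPred_eq,
      hT.connected.preconnected.isProperNatColoring_iff_branches v]
    exact ⟨fun ⟨h, hv⟩ => ⟨hv, fun u => ⟨(h u u.2).2, fun hu => (h u u.2).1 (hv.trans hu.symm)⟩⟩,
      fun ⟨hv, h⟩ => ⟨fun u hu => ⟨fun hvu => (h ⟨u, hu⟩).2 (hvu.symm.trans hv), (h ⟨u, hu⟩).1⟩,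
        hv⟩⟩
  rw [Zcsf_eq_colorGF, colorGF_congr_equiv _ hsplit, colorGF_option, colorGF_sigma,
    Finset.prod_subtype _ fun u => T.mem_neighborFinset v u]
  simp only [csf_sub_Zcsf]
  rfl
end

section
/- Let T be a tree (a connected acyclic finite simple graph) on n ≥ 1 vertices, let v be a vertex of T, and suppose F_1, …, F_n ∈ MvPowerSeries ℕ ℤ are symmetric power series satisfying Z_T^v(c) = Σ_{i=1}^n x_c^i · F_i for every color c ∈ ℕ. Then X_T = Σ_{i=1}^n p_i · F_i, where p_i is the i-th power-sum series. -/
/-- A formal power series in the variables `(x_c)_{c : ℕ}` is symmetric if its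
coefficient function is invariant under every permutation of `ℕ` acting on
exponent vectors. -/
def MvPowerSeries.IsSymmetricFun (F : MvPowerSeries ℕ ℤ) : Prop :=
  ∀ (e : Equiv.Perm ℕ) (d : ℕ →₀ ℕ),
    MvPowerSeries.coeff (Finsupp.equivMapDomain e d) F = MvPowerSeries.coeff d F

open Classical in
/-- The `i`-th power-sum symmetric function `p_i = Σ_c x_c^i`, as the power series
whose coefficient is `1` exactly on exponent vectors of the form `i·e_c`
(supported at a single color `c` with value `i`) and `0` elsewhere. -/
noncomputable def pSum (i : ℕ) : MvPowerSeries ℕ ℤ :=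
  fun d => if ∃ c : ℕ, d = Finsupp.single c i then 1 else 0

/-!
Sorting the proper colorings of `T` by the color of `v` gives `X_T = Σ_c Z_T^v(c)`, hence
`X_T = Σ_i (Σ_c x_c^i) F_i = Σ_i p_i F_i`. The infinite sums over colors are handled
coefficientwise: at an exponent vector `d`, only the colors in the support of `d` contribute,
both to `X_T` and (since `i ≥ 1`) to `p_i F_i`.
-/

namespace MvPowerSeries

variable {σ R : Type*} [CommSemiring R]

theorem coeff_mul_congr_left {f f' : MvPowerSeries σ R} (g : MvPowerSeries σ R) {d : σ →₀ ℕ}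
    (h : ∀ a ≤ d, coeff a f = coeff a f') : coeff d (f * g) = coeff d (f' * g) := by
  classical
  simp only [coeff_mul]
  exact Finset.sum_congr rfl fun p hp => by
    rw [h p.1 (Finset.HasAntidiagonal.antidiagonal.fst_le hp)]

end MvPowerSeries

theorem Set.ncard_eq_sum_ncard_fiberwise {α β : Type*} {s : Set α} (hs : s.Finite)
    {f : α → β} {t : Finset β} (h : s.MapsTo f t) :
    s.ncard = ∑ b ∈ t, {a ∈ s | f a = b}.ncard := by
  classical
  rw [← hs.coe_toFinset] at h ⊢
  simp only [Set.ncard_coe_finset, Finset.card_eq_sum_card_fiberwise h]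
  exact Finset.sum_congr rfl fun b _ => by rw [← Set.ncard_coe_finset, Finset.coe_filter]; rfl

open MvPowerSeries

theorem coeff_pSum_eq_coeff_sum_X_pow {i : ℕ} (hi : i ≠ 0) {a d : ℕ →₀ ℕ} (had : a ≤ d) :
    coeff a (pSum i) = coeff a (∑ c ∈ d.support, (X c : MvPowerSeries ℕ ℤ) ^ i) := by
  classical
  simp only [map_sum, coeff_X_pow]
  by_cases ha : ∃ c, a = Finsupp.single c i
  · obtain ⟨c, rfl⟩ := ha
    have hc : c ∈ d.support := by
      have := Finsupp.single_le_iff.mp had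
      rw [Finsupp.mem_support_iff]
      omega
    simp only [Finsupp.single_left_inj hi]
    rw [Finset.sum_ite_eq, if_pos hc]
    exact if_pos ⟨c, rfl⟩
  · rw [Finset.sum_eq_zero fun c _ => if_neg fun h => ha ⟨c, h⟩]
    exact if_neg ha

theorem coeff_pSum_mul {i : ℕ} (hi : i ≠ 0) (F : MvPowerSeries ℕ ℤ) (d : ℕ →₀ ℕ) :
    coeff d (pSum i * F) = ∑ c ∈ d.support, coeff d ((X c : MvPowerSeries ℕ ℤ) ^ i * F) := by
  rw [coeff_mul_congr_left F fun a had => coeff_pSum_eq_coeff_sum_X_pow hi had,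
    Finset.sum_mul, map_sum]

section Colorings

variable {V : Type} (G : SimpleGraph V) (d : ℕ →₀ ℕ)

def properColoringsOfType : Set (V → ℕ) :=
  {κ | G.IsProperNatColoring κ ∧ ∀ c : ℕ, (κ ⁻¹' {c}).ncard = d c}

theorem coeff_csf : coeff d (csf G) = (properColoringsOfType G d).ncard := rfl

theorem coeff_Zcsf (v : V) (c : ℕ) :
    coeff d (Zcsf G v c) = {κ ∈ properColoringsOfType G d | κ v = c}.ncard := by
  show ((Set.ncard _ : ℕ) : ℤ) = _
  congr 2
  ext κ
  simp only [properColoringsOfType, Set.mem_ofPred_eq]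
  tauto

variable [Fintype V] {G d}

theorem mem_support_of_mem_properColoringsOfType {κ : V → ℕ}
    (hκ : κ ∈ properColoringsOfType G d) (x : V) : κ x ∈ d.support := by
  rw [Finsupp.mem_support_iff, ← hκ.2 (κ x)]
  exact ((Set.ncard_pos (Set.toFinite (κ ⁻¹' {κ x}))).mpr ⟨x, rfl⟩).ne'

variable (G d)

theorem finite_properColoringsOfType : (properColoringsOfType G d).Finite :=
  (Set.Finite.pi fun _ : V => (d.support : Set ℕ).toFinite).subset fun _ hκ =>
    Set.mem_univ_pi.mpr (mem_support_of_mem_properColoringsOfType hκ)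

theorem coeff_csf_eq_sum_coeff_Zcsf (v : V) :
    coeff d (csf G) = ∑ c ∈ d.support, coeff d (Zcsf G v c) := by
  simp only [coeff_csf, coeff_Zcsf]
  exact_mod_cast Set.ncard_eq_sum_ncard_fiberwise (finite_properColoringsOfType G d)
    fun _ hκ => mem_support_of_mem_properColoringsOfType hκ v

end Colorings

theorem csf_eq_sum_powerSum_mul_general {V : Type} [Fintype V]
    (T : SimpleGraph V) (n : ℕ) (v : V) (F : ℕ → MvPowerSeries ℕ ℤ)
    (hZ : ∀ c : ℕ, Zcsf T v c =
      ∑ i ∈ Finset.Icc 1 n, (MvPowerSeries.X c : MvPowerSeries ℕ ℤ) ^ i * F i) :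
    csf T = ∑ i ∈ Finset.Icc 1 n, pSum i * F i := by
  ext d
  simp only [coeff_csf_eq_sum_coeff_Zcsf T d v, hZ, map_sum]
  rw [Finset.sum_comm]
  exact Finset.sum_congr rfl fun i hi =>
    (coeff_pSum_mul (Nat.one_le_iff_ne_zero.mp (Finset.mem_Icc.mp hi).1) (F i) d).symm

/-- If `T` is a tree on `n ≥ 1` vertices with vertex `v` and `F_1, …, F_n` are
symmetric power series with `Z_T^v(c) = Σ_{i=1}^n x_c^i F_i` for all colors `c`, then
`X_T = Σ_{i=1}^n p_i F_i`, where `p_i` is the `i`-th power-sum series. -/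
theorem csf_eq_sum_powerSum_mul {V : Type} [Fintype V]
    (T : SimpleGraph V) (hT : T.IsTree) (n : ℕ) (hn : Fintype.card V = n)
    (h1 : 1 ≤ n) (v : V) (F : ℕ → MvPowerSeries ℕ ℤ)
    (hsym : ∀ i ∈ Finset.Icc 1 n, (F i).IsSymmetricFun)
    (hZ : ∀ c : ℕ, Zcsf T v c =
      ∑ i ∈ Finset.Icc 1 n, (MvPowerSeries.X c : MvPowerSeries ℕ ℤ) ^ i * F i) :
    csf T = ∑ i ∈ Finset.Icc 1 n, pSum i * F i :=
  csf_eq_sum_powerSum_mul_general T n v F hZ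
end

section
/- Let q be a prime, let m, n be positive integers, and let f be a polynomial in m variables over ℤ/qℤ (an element of MvPolynomial (Fin m) (ZMod q)) that is not the zero polynomial and has total degree at most n. Then the number of points x : Fin m → ℤ/qℤ with f(x) = 0 is at most n · q^{m−1}. Equivalently, if C_1, …, C_m are chosen independently and uniformly at random from ℤ/qℤ, then the probability that f(C_1, …, C_m) ≡ 0 (mod q) is at most n/q. -/
open Finset MvPolynomial

theorem MvPolynomial.card_zeros_mul_card_le {R : Type*} [CommRing R] [IsDomain R] [Fintype R]
    [DecidableEq R] {n : ℕ} {p : MvPolynomial (Fin n) R} (hp : p ≠ 0) :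
    #{x : Fin n → R | eval x p = 0} * Fintype.card R ≤ p.totalDegree * Fintype.card R ^ n := by
  have hR : (0 : ℚ≥0) < Fintype.card R := by exact_mod_cast Fintype.card_pos
  have h := schwartz_zippel_totalDegree hp univ
  rw [Fintype.piFinset_univ, card_univ, div_le_div_iff₀ (by positivity) hR] at h
  exact_mod_cast h

theorem card_zero_set_le_general (q : ℕ) (hq : q.Prime) (m n : ℕ)
    (f : MvPolynomial (Fin m) (ZMod q)) (hf : f ≠ 0) (hdeg : f.totalDegree ≤ n) :
    Set.ncard {x : Fin m → ZMod q | MvPolynomial.eval x f = 0} ≤ n * q ^ (m - 1) := by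
  have : Fact q.Prime := ⟨hq⟩
  rw [← coe_filter_univ, Set.ncard_coe_finset]
  refine Nat.le_of_mul_le_mul_right ?_ hq.pos
  calc _ ≤ f.totalDegree * q ^ m := by simpa using card_zeros_mul_card_le hf
    -- `m ≤ m - 1 + 1` also covers `m = 0`, where `m - 1` truncates to `0`.
    _ ≤ n * q ^ (m - 1 + 1) := by gcongr; exacts [hq.one_le, by omega]
    _ = n * q ^ (m - 1) * q := by ring

/-- Let `q` be a prime and `f` a nonzero polynomial in `m` variables over
`ℤ/qℤ` of total degree at most `n`. Then the number of points `x : Fin m → ℤ/qℤ` with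
`f(x) = 0` is at most `n · q^{m−1}` (so a uniformly random point is a zero of `f` with
probability at most `n/q`). -/
theorem card_zero_set_le (q : ℕ) (hq : q.Prime) (m n : ℕ) (hm : 1 ≤ m) (hn : 1 ≤ n)
    (f : MvPolynomial (Fin m) (ZMod q)) (hf : f ≠ 0) (hdeg : f.totalDegree ≤ n) :
    Set.ncard {x : Fin m → ZMod q | MvPolynomial.eval x f = 0} ≤ n * q ^ (m - 1) :=
  card_zero_set_le_general q hq m n f hf hdeg
end

section
/- Let T and T' be trees (connected acyclic simple graphs) each on n vertices, and suppose that Σ_{S ⊆ E(T)} (−1)^{|S|} p_{λ(S)} = Σ_{S ⊆ E(T')} (−1)^{|S|} p_{λ(S)} as elements of MvPowerSeries ℕ ℤ. Then for every positive integer k ≤ n, Σ_{S ∈ P_k(T)} (−1)^{|S|} p_{λ(S)} = Σ_{S ∈ P_k(T')} (−1)^{|S|} p_{λ(S)}, where P_k(T) is the set of edge subsets S ⊆ E(T) such that every connected component of the spanning subgraph (V(T), S) has at most k vertices. That is, equality of the chromatic symmetric functions (in their power-sum expansion) implies equality of the k-truncated chromatic symmetric functions. -/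
/-- `p_{λ(H)}`: the product over the connected components `K` of a graph `H`
of the power-sum series `p_{|K|}`. -/
noncomputable def componentSizeProd {V : Type} [Fintype V] (H : SimpleGraph V) : MvPowerSeries ℕ ℤ :=
  letI := Fintype.ofFinite H.ConnectedComponent
  ∏ K : H.ConnectedComponent, pSum (Set.ncard {u : V | H.connectedComponentMk u = K})

/-- The power-sum expansion `Σ_{S ⊆ E(T)} (−1)^{|S|} p_{λ(S)}` of the chromatic
symmetric function of `T` (Stanley's Theorem 2.5), where `λ(S)` records the sizes of
the connected components of the spanning subgraph `(V(T), S)`. -/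
noncomputable def csfExpansion {V : Type} [Fintype V] [DecidableEq V]
    (T : SimpleGraph V) [DecidableRel T.Adj] : MvPowerSeries ℕ ℤ :=
  Finset.sum T.edgeFinset.powerset (fun S : Finset (Sym2 V) =>
    (-1 : MvPowerSeries ℕ ℤ) ^ S.card *
      componentSizeProd (SimpleGraph.fromEdgeSet (↑S : Set (Sym2 V))))

open Classical in
/-- The `k`-truncated chromatic symmetric function
`ₖX_T = Σ_{S ∈ P_k(T)} (−1)^{|S|} p_{λ(S)}`, where `P_k(T)` is the set of edge
subsets `S ⊆ E(T)` such that every connected component of the spanning subgraph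
`(V(T), S)` has at most `k` vertices. -/
noncomputable def truncCSF {V : Type} [Fintype V] [DecidableEq V]
    (k : ℕ) (T : SimpleGraph V) [DecidableRel T.Adj] : MvPowerSeries ℕ ℤ :=
  Finset.sum (T.edgeFinset.powerset.filter (fun S : Finset (Sym2 V) =>
      ∀ u : V, Set.ncard {w : V |
        (SimpleGraph.fromEdgeSet (↑S : Set (Sym2 V))).Reachable w u} ≤ k))
    (fun S : Finset (Sym2 V) =>
      (-1 : MvPowerSeries ℕ ℤ) ^ S.card *
        componentSizeProd (SimpleGraph.fromEdgeSet (↑S : Set (Sym2 V))))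

/-!
Stanley's expansion writes `X_T = Σ_λ c_T(λ) p_λ` with `c_T(λ) = Σ_{λ(S) = λ} (-1)^{|S|}`,
and `ₖX_T` is the part of this sum over the `λ` with all parts at most `k`. The `p_λ` are
linearly independent over `ℤ`: if `λ = (λ_1, …, λ_ℓ)`, the monomial `x_1^{λ_1} ⋯ x_ℓ^{λ_ℓ}`
occurs in `p_λ` but in no `p_μ` with `μ ≠ λ` and `ℓ(μ) ≤ ℓ`. So `X_T = X_{T'}` forces
`c_T = c_{T'}`, and then all truncations agree.
-/

open Finset MvPowerSeries

noncomputable def pProd (m : Multiset ℕ) : MvPowerSeries ℕ ℤ := (m.map pSum).prod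

@[simp]
lemma pProd_zero : pProd 0 = 1 := by simp [pProd]

@[simp]
lemma pProd_cons (i : ℕ) (m : Multiset ℕ) : pProd (i ::ₘ m) = pSum i * pProd m := by
  simp [pProd]

lemma coeff_pSum_nonneg (i : ℕ) (d : ℕ →₀ ℕ) : 0 ≤ coeff d (pSum i) := by
  classical
  change 0 ≤ ite _ _ _
  split_ifs <;> norm_num

lemma coeff_single_pSum (c i : ℕ) : coeff (Finsupp.single c i) (pSum i) = 1 :=
  if_pos ⟨c, rfl⟩

lemma coeff_pProd_nonneg (m : Multiset ℕ) (d : ℕ →₀ ℕ) : 0 ≤ coeff d (pProd m) := by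
  classical
  induction m using Multiset.induction_on generalizing d with
  | empty => rw [pProd_zero, coeff_one]; split_ifs <;> norm_num
  | cons i m ih =>
    rw [pProd_cons, coeff_mul]
    exact sum_nonneg fun p _ => mul_nonneg (coeff_pSum_nonneg _ _) (ih _)

lemma exists_eq_single_add_of_coeff_pSum_mul_ne_zero {i : ℕ} {f : MvPowerSeries ℕ ℤ}
    {d : ℕ →₀ ℕ} (h : coeff d (pSum i * f) ≠ 0) :
    ∃ c e, d = Finsupp.single c i + e ∧ coeff e f ≠ 0 := by
  classical
  rw [coeff_mul] at h
  obtain ⟨⟨a, e⟩, hae, hne⟩ := exists_ne_zero_of_sum_ne_zero h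
  have ha : coeff a (pSum i) ≠ 0 := left_ne_zero_of_mul hne
  obtain ⟨c, rfl⟩ : ∃ c, a = Finsupp.single c i := by
    by_contra hc
    exact ha (if_neg hc)
  exact ⟨c, e, (mem_antidiagonal.mp hae).symm, right_ne_zero_of_mul hne⟩

def nonzeroValues (d : ℕ →₀ ℕ) : Multiset ℕ := d.support.val.map d

lemma card_nonzeroValues (d : ℕ →₀ ℕ) : Multiset.card (nonzeroValues d) = #d.support :=
  Multiset.card_map _ _

lemma nonzeroValues_single_add {c i : ℕ} {e : ℕ →₀ ℕ} (hi : i ≠ 0) (hc : c ∉ e.support) :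
    nonzeroValues (Finsupp.single c i + e) = i ::ₘ nonzeroValues e := by
  classical
  have hdisj : Disjoint (Finsupp.single c i).support e.support := by
    simpa [Finsupp.support_single c hi] using hc
  have hec : e c = 0 := Finsupp.notMem_support_iff.mp hc
  rw [nonzeroValues, Finsupp.support_add_eq hdisj, Finsupp.support_single c hi,
    ← insert_eq, insert_val_of_notMem hc, Multiset.map_cons]
  congr 1
  · simp [hec]
  · refine Multiset.map_congr rfl fun x hx => ?_
    have hxc : c ≠ x := fun hxc => hc (hxc ▸ hx)
    simp [hxc]

lemma support_single_add_subset (c i : ℕ) (e : ℕ →₀ ℕ) :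
    (Finsupp.single c i + e).support ⊆ insert c e.support := by
  classical
  refine Finsupp.support_add.trans ?_
  rw [insert_eq]
  exact union_subset_union_left Finsupp.support_single_subset

lemma card_support_le_of_coeff_pProd_ne_zero {m : Multiset ℕ} {d : ℕ →₀ ℕ}
    (h : coeff d (pProd m) ≠ 0) : #d.support ≤ Multiset.card m := by
  classical
  induction m using Multiset.induction_on generalizing d with
  | empty =>
    rw [pProd_zero, coeff_one] at h
    simp_all
  | cons i m ih =>
    rw [pProd_cons] at h
    obtain ⟨c, e, rfl, he⟩ := exists_eq_single_add_of_coeff_pSum_mul_ne_zero h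
    calc #(Finsupp.single c i + e).support
        ≤ #(insert c e.support) := card_le_card (support_single_add_subset c i e)
      _ ≤ #e.support + 1 := card_insert_le _ _
      _ ≤ Multiset.card (i ::ₘ m) := by rw [Multiset.card_cons]; exact Nat.succ_le_succ (ih he)

lemma nonzeroValues_eq_of_coeff_pProd_ne_zero {m : Multiset ℕ} (hm : ∀ x ∈ m, 0 < x)
    {d : ℕ →₀ ℕ} (h : coeff d (pProd m) ≠ 0) (hcard : Multiset.card m ≤ #d.support) :
    nonzeroValues d = m := by
  classical
  induction m using Multiset.induction_on generalizing d with
  | empty =>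
    rw [pProd_zero, coeff_one] at h
    simp_all [nonzeroValues]
  | cons i m ih =>
    rw [pProd_cons] at h
    obtain ⟨c, e, rfl, he⟩ := exists_eq_single_add_of_coeff_pSum_mul_ne_zero h
    have hle := card_support_le_of_coeff_pProd_ne_zero he
    rw [Multiset.card_cons] at hcard
    have hc : c ∉ e.support := by
      intro hc
      have := card_le_card ((support_single_add_subset c i e).trans (insert_subset hc subset_rfl))
      omega
    have hi : i ≠ 0 := (hm i (Multiset.mem_cons_self i m)).ne'
    rw [← card_nonzeroValues (Finsupp.single c i + e), nonzeroValues_single_add hi hc,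
      Multiset.card_cons, card_nonzeroValues] at hcard
    rw [nonzeroValues_single_add hi hc,
      ih (fun x hx => hm x (Multiset.mem_cons_of_mem hx)) he (by omega)]

lemma exists_nonzeroValues_eq_and_coeff_pProd_pos {m : Multiset ℕ} (hm : ∀ x ∈ m, 0 < x) :
    ∃ d : ℕ →₀ ℕ, nonzeroValues d = m ∧ 0 < coeff d (pProd m) := by
  classical
  induction m using Multiset.induction_on with
  | empty => exact ⟨0, by simp [nonzeroValues], by simp⟩
  | cons i m ih =>
    obtain ⟨e, he, hpos⟩ := ih fun x hx => hm x (Multiset.mem_cons_of_mem hx)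
    obtain ⟨c, hc⟩ := Infinite.exists_notMem_finset e.support
    refine ⟨Finsupp.single c i + e,
      by rw [nonzeroValues_single_add (hm i (Multiset.mem_cons_self i m)).ne' hc, he], ?_⟩
    rw [pProd_cons, coeff_mul]
    calc 0 < coeff (Finsupp.single c i) (pSum i) * coeff e (pProd m) := by
          rwa [coeff_single_pSum, one_mul]
      _ ≤ _ := single_le_sum
          (f := fun p : (ℕ →₀ ℕ) × (ℕ →₀ ℕ) => coeff p.1 (pSum i) * coeff p.2 (pProd m))
          (fun p _ => mul_nonneg (coeff_pSum_nonneg _ _) (coeff_pProd_nonneg _ _))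
          (mem_antidiagonal.mpr rfl :
            (Finsupp.single c i, e) ∈ antidiagonal (Finsupp.single c i + e))

theorem linearIndepOn_pProd : LinearIndepOn ℤ pProd {m : Multiset ℕ | ∀ x ∈ m, 0 < x} := by
  classical
  rw [linearIndepOn_iff]
  intro l hl hzero
  by_contra hne
  obtain ⟨m₀, hm₀, hmax⟩ := l.support.exists_max_image Multiset.card
    (Finsupp.support_nonempty_iff.mpr hne)
  obtain ⟨d, hd, hpos⟩ := exists_nonzeroValues_eq_and_coeff_pProd_pos (hl hm₀)
  have hcoeff : coeff d (Finsupp.linearCombination ℤ pProd l) = l m₀ * coeff d (pProd m₀) := by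
    rw [Finsupp.linearCombination_apply, Finsupp.sum, map_sum]
    refine (sum_eq_single_of_mem m₀ hm₀ fun m hm hmm₀ => ?_).trans ?_
    · suffices coeff d (pProd m) = 0 by rw [map_zsmul, smul_eq_mul, this, mul_zero]
      by_contra hdm
      have hcard : #d.support = Multiset.card m₀ := by rw [← card_nonzeroValues, hd]
      exact hmm₀ (hd ▸ nonzeroValues_eq_of_coeff_pProd_ne_zero (hl hm) hdm
        (hcard ▸ hmax m hm)).symm
    · rw [map_zsmul, smul_eq_mul]
  rw [hzero, map_zero] at hcoeff
  exact (mul_ne_zero (Finsupp.mem_support_iff.mp hm₀) hpos.ne') hcoeff.symm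

section Graph

variable {V : Type} [Fintype V]

noncomputable def componentSizes (H : SimpleGraph V) : Multiset ℕ :=
  letI := Fintype.ofFinite H.ConnectedComponent
  (univ : Finset H.ConnectedComponent).val.map
    fun K => Set.ncard {u : V | H.connectedComponentMk u = K}

lemma componentSizeProd_eq_pProd (H : SimpleGraph V) :
    componentSizeProd H = pProd (componentSizes H) := by
  rw [componentSizeProd, componentSizes, pProd, Multiset.map_map]
  exact prod_eq_multiset_prod _ _

lemma pos_of_mem_componentSizes {H : SimpleGraph V} {x : ℕ} (hx : x ∈ componentSizes H) :
    0 < x := by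
  obtain ⟨K, -, rfl⟩ := Multiset.mem_map.mp hx
  obtain ⟨u, hu⟩ := K.exists_rep
  exact (Set.ncard_pos (Set.toFinite _)).mpr ⟨u, hu⟩

lemma forall_ncard_reachable_le_iff (H : SimpleGraph V) (k : ℕ) :
    (∀ u : V, Set.ncard {w : V | H.Reachable w u} ≤ k) ↔ ∀ x ∈ componentSizes H, x ≤ k := by
  simp only [componentSizes, Multiset.forall_mem_map_iff, mem_val, mem_univ, true_implies,
    ← SimpleGraph.ConnectedComponent.eq]
  exact (SimpleGraph.ConnectedComponent.forall
    (p := fun K => Set.ncard {u : V | H.connectedComponentMk u = K} ≤ k)).symm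

variable (T : SimpleGraph V) [DecidableRel T.Adj]

noncomputable def powerSumCoeffs : Multiset ℕ →₀ ℤ :=
  ∑ S ∈ T.edgeFinset.powerset,
    Finsupp.single (componentSizes (SimpleGraph.fromEdgeSet (↑S : Set (Sym2 V)))) ((-1) ^ #S)

lemma powerSumCoeffs_mem_supported :
    powerSumCoeffs T ∈ Finsupp.supported ℤ ℤ {m : Multiset ℕ | ∀ x ∈ m, 0 < x} :=
  Submodule.sum_mem _ fun _ _ =>
    Finsupp.single_mem_supported ℤ _ fun _ => pos_of_mem_componentSizes

variable [DecidableEq V]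

lemma csfExpansion_eq_linearCombination :
    csfExpansion T = Finsupp.linearCombination ℤ pProd (powerSumCoeffs T) := by
  rw [csfExpansion, powerSumCoeffs, map_sum]
  refine sum_congr rfl fun S _ => ?_
  rw [Finsupp.linearCombination_single, componentSizeProd_eq_pProd, zsmul_eq_mul]
  push_cast
  rfl

open Classical in
lemma truncCSF_eq_linearCombination (k : ℕ) :
    truncCSF k T = Finsupp.linearCombination ℤ pProd
      ((powerSumCoeffs T).filter fun m => ∀ x ∈ m, x ≤ k) := by
  rw [truncCSF, sum_filter, powerSumCoeffs, Finsupp.filter_sum, map_sum]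
  refine sum_congr rfl fun S _ => ?_
  simp only [forall_ncard_reachable_le_iff]
  split_ifs with hk
  · rw [Finsupp.filter_single_of_pos _ hk, Finsupp.linearCombination_single,
      componentSizeProd_eq_pProd, zsmul_eq_mul]
    push_cast
    rfl
  · rw [Finsupp.filter_single_of_neg _ hk, map_zero]

end Graph

theorem truncated_csf_eq_of_csf_eq_general {V V' : Type}
    [Fintype V] [DecidableEq V] [Fintype V'] [DecidableEq V']
    (T : SimpleGraph V) [DecidableRel T.Adj] (T' : SimpleGraph V') [DecidableRel T'.Adj]
    (n : ℕ)
    (h : csfExpansion T = csfExpansion T') :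
    ∀ k : ℕ, 1 ≤ k → k ≤ n → truncCSF k T = truncCSF k T' := by
  intro k _ _
  have hcoeffs : powerSumCoeffs T = powerSumCoeffs T' :=
    linearIndepOn_iffₛ.mp linearIndepOn_pProd _ (powerSumCoeffs_mem_supported T) _
      (powerSumCoeffs_mem_supported T')
      (by rw [← csfExpansion_eq_linearCombination, ← csfExpansion_eq_linearCombination, h])
  rw [truncCSF_eq_linearCombination, truncCSF_eq_linearCombination, hcoeffs]

/-- If two trees `T, T'` on `n` vertices have equal chromatic symmetric
functions (in the power-sum expansion `Σ_{S ⊆ E} (−1)^{|S|} p_{λ(S)}`), then for every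
`1 ≤ k ≤ n` their `k`-truncated chromatic symmetric functions are also equal. -/
theorem truncated_csf_eq_of_csf_eq {V V' : Type}
    [Fintype V] [DecidableEq V] [Fintype V'] [DecidableEq V']
    (T : SimpleGraph V) [DecidableRel T.Adj] (T' : SimpleGraph V') [DecidableRel T'.Adj]
    (hT : T.IsTree) (hT' : T'.IsTree) (n : ℕ)
    (hV : Fintype.card V = n) (hV' : Fintype.card V' = n)
    (h : csfExpansion T = csfExpansion T') :
    ∀ k : ℕ, 1 ≤ k → k ≤ n → truncCSF k T = truncCSF k T' :=
  truncated_csf_eq_of_csf_eq_general T T' n h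
end

section
/- For every natural number n with n > e^7, the number of primes q with n^2 < q ≤ 2n^2 is greater than n / log n; that is, π(2n^2) − π(n^2) > n / log n, where π denotes the prime-counting function and log is the natural logarithm. -/
/-! Erdős's proof of Bertrand's postulate, made quantitative. The primes `p ∈ (2N/3, N]` do not
divide `C(2N, N)`, the primes `√(2N) < p ≤ 2N/3` divide it at most once (so their product is at
most `4 ^ (2N/3)`), and every prime power `p ^ v_p(C(2N, N))` is at most `2N`; what is left are
the primes in `(N, 2N]`. With `4 ^ N < N · C(2N, N)` this gives
`N log 4 / 3 < log N + (√(2N) + π(2N) - π(N)) log (2N)`. For `N = n²` and `n > e⁷ > 1024`, the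
terms `log N` and `√(2N) log (2N)` are small against `n²`, leaving `(π(2n²) - π(n²)) log n > n`. -/

namespace Nat

open Finset

theorem card_filter_prime_Ioc {a b : ℕ} (h : a ≤ b) :
    #{p ∈ Ioc a b | p.Prime} = primeCounting b - primeCounting a := by
  rw [← primesLE_card_eq_primeCounting, ← primesLE_card_eq_primeCounting,
    primesLE_eq_filter_Ioc_zero, primesLE_eq_filter_Ioc_zero,
    ← Ioc_union_Ioc_eq_Ioc (zero_le a) h, filter_union, card_union_of_disjoint
      (disjoint_filter_filter (Ioc_disjoint_Ioc_of_le le_rfl)), Nat.add_sub_cancel_left]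

theorem prod_range_pow_factorization_centralBinom_le {n : ℕ} (hn : n ≠ 0) :
    ∏ p ∈ range (2 * n / 3 + 1), p ^ (centralBinom n).factorization p
      ≤ (2 * n) ^ sqrt (2 * n) * 4 ^ (2 * n / 3) := by
  set f : ℕ → ℕ := fun p ↦ p ^ (centralBinom n).factorization p
  set S := {p ∈ range (2 * n / 3 + 1) | p.Prime}
  have hS : ∏ p ∈ S, f p = ∏ p ∈ range (2 * n / 3 + 1), f p := by
    refine prod_filter_of_ne fun p _ h ↦ ?_
    contrapose! h
    simp only [f, factorization_eq_zero_of_not_prime _ h, pow_zero]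
  rw [← hS, ← prod_filter_mul_prod_filter_not S (· ≤ sqrt (2 * n))]
  gcongr
  · have hcard : #{p ∈ S | p ≤ sqrt (2 * n)} ≤ sqrt (2 * n) := by
      refine (card_le_card fun p hp ↦ ?_).trans (card_Icc 1 _).le
      obtain ⟨hpS, hp⟩ := mem_filter.1 hp
      exact mem_Icc.2 ⟨(mem_filter.1 hpS).2.one_lt.le, hp⟩
    calc ∏ p ∈ S with p ≤ sqrt (2 * n), f p
        ≤ (2 * n) ^ #{p ∈ S | p ≤ sqrt (2 * n)} :=
          prod_le_pow_card _ _ _ fun p _ ↦ pow_factorization_choose_le (by omega)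
      _ ≤ (2 * n) ^ sqrt (2 * n) := Nat.pow_le_pow_right (by omega) hcard
  · calc ∏ p ∈ S with ¬p ≤ sqrt (2 * n), f p
        ≤ ∏ p ∈ S with ¬p ≤ sqrt (2 * n), p := by
          refine prod_le_prod' fun p hp ↦ ?_
          obtain ⟨hpS, hp⟩ := mem_filter.1 hp
          exact (Nat.pow_le_pow_right (mem_filter.1 hpS).2.pos
            (factorization_choose_le_one (sqrt_lt'.1 (not_le.1 hp)))).trans (pow_one p).le
      _ ≤ ∏ p ∈ S, p := prod_le_prod_of_subset_of_one_le' (filter_subset _ _)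
          fun p hp _ ↦ (mem_filter.1 hp).2.one_lt.le
      _ ≤ 4 ^ (2 * n / 3) := primorial_le_four_pow _

theorem prod_Ioc_pow_factorization_centralBinom_le {n : ℕ} (hn : 2 < n) :
    ∏ p ∈ Ioc (2 * n / 3) (2 * n), p ^ (centralBinom n).factorization p
      ≤ (2 * n) ^ (primeCounting (2 * n) - primeCounting n) := by
  have hsub : {p ∈ Ioc n (2 * n) | p.Prime} ⊆ Ioc (2 * n / 3) (2 * n) :=
    fun p hp ↦ Ioc_subset_Ioc_left (by omega) (mem_filter.1 hp).1
  rw [← prod_subset hsub fun p hp hp' ↦ ?_, ← card_filter_prime_Ioc (by omega)]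
  · exact prod_le_pow_card _ _ _ fun p _ ↦ pow_factorization_choose_le (by omega)
  rw [mem_Ioc] at hp
  by_cases hprime : p.Prime
  · have hpn : p ≤ n := by
      by_contra h
      exact hp' (mem_filter.2 ⟨mem_Ioc.2 ⟨by omega, hp.2⟩, hprime⟩)
    rw [factorization_centralBinom_of_two_mul_self_lt_three_mul hn hpn (by omega), pow_zero]
  · rw [factorization_eq_zero_of_not_prime _ hprime, pow_zero]

theorem centralBinom_le_mul_pow_primeCounting_sub {n : ℕ} (hn : 2 < n) :
    centralBinom n ≤
      (2 * n) ^ sqrt (2 * n) * 4 ^ (2 * n / 3) *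
        (2 * n) ^ (primeCounting (2 * n) - primeCounting n) := by
  rw [← n.prod_pow_factorization_centralBinom, range_eq_Ico,
    ← prod_Ico_consecutive _ (zero_le _) (by omega : 2 * n / 3 + 1 ≤ 2 * n + 1),
    Ico_add_one_add_one_eq_Ioc, ← range_eq_Ico]
  exact mul_le_mul' (prod_range_pow_factorization_centralBinom_le (by omega))
    (prod_Ioc_pow_factorization_centralBinom_le hn)

end Nat

section

open Real

theorem log_le_two_mul_div_of_sq_le {x c : ℝ} (hc : 0 < c) (hx : c ^ 2 ≤ x) :
    log x ≤ 2 * x / c := by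
  have hx0 : 0 ≤ x := (sq_nonneg c).trans hx
  have hsqrt : c ≤ √x := le_sqrt_of_sq_le hx
  have hlog : log x ≤ 2 * √x := by
    have := log_le_rpow_div hx0 (by norm_num : (0 : ℝ) < 1 / 2)
    rwa [← sqrt_eq_rpow, div_div_eq_mul_div, div_one, mul_comm] at this
  rw [le_div_iff₀ hc]
  calc log x * c ≤ 2 * √x * √x := mul_le_mul hlog hsqrt hc.le (by positivity)
    _ = 2 * x := by rw [mul_assoc, mul_self_sqrt hx0]

theorem lt_mul_log_of_sq_mul_log_four_div_three_lt {x k : ℝ} (hx : 1024 ≤ x) (hk : 0 ≤ k)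
    (h : x ^ 2 * log 4 / 3 < log (x ^ 2) + (√(2 * x ^ 2) + k) * log (2 * x ^ 2)) :
    x < k * log x := by
  have hx0 : 0 < x := by linarith
  have hlog2 : log 2 < log x := log_lt_log two_pos (by linarith)
  have hlogx : log x ≤ x / 16 := by
    have := log_le_two_mul_div_of_sq_le (x := x) (c := 32) (by norm_num) (by linarith)
    linarith
  rw [log_pow, log_mul two_ne_zero (by positivity), log_pow, sqrt_mul zero_le_two, sqrt_sq hx0.le,
    show (4 : ℝ) = 2 ^ 2 by norm_num, log_pow] at h
  push_cast at h
  by_contra! hle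
  have hk3 : k * (log 2 + 2 * log x) ≤ 3 * x := by
    nlinarith [mul_le_mul_of_nonneg_left hlog2.le hk]
  have hsqrt2 : √2 * x * (log 2 + 2 * log x) ≤ 3 / 2 * x * (3 * (x / 16)) := by
    have := sqrt_two_lt_three_halves
    have : 0 < log 2 := log_pos one_lt_two
    gcongr <;> linarith
  have hx2log2 : 0.693 * x ^ 2 ≤ log 2 * x ^ 2 := by gcongr; linarith [log_two_gt_d9]
  have hxx : 1024 * x ≤ x ^ 2 := by nlinarith
  linarith

theorem mul_log_four_div_three_lt_log_add_mul_log {n : ℕ} (hn : 4 ≤ n) :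
    n * log 4 / 3 < log n +
      (√(2 * n) + (Nat.primeCounting (2 * n) - Nat.primeCounting n : ℕ)) * log (2 * n) := by
  set k := Nat.primeCounting (2 * n) - Nat.primeCounting n
  have hnat : 4 ^ n < n * ((2 * n) ^ Nat.sqrt (2 * n) * 4 ^ (2 * n / 3) * (2 * n) ^ k) :=
    (Nat.four_pow_lt_mul_centralBinom n hn).trans_le
      (Nat.mul_le_mul_left n (Nat.centralBinom_le_mul_pow_primeCounting_sub (by omega)))
  have hn0 : (0 : ℝ) < n := by positivity
  have hlog := log_lt_log (by positivity) (Nat.cast_lt (α := ℝ) |>.2 hnat)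
  push_cast at hlog
  rw [log_pow, log_mul hn0.ne' (by positivity), log_mul (by positivity) (by positivity),
    log_mul (by positivity) (by positivity), log_pow, log_pow, log_pow] at hlog
  have hsqrt : (Nat.sqrt (2 * n) : ℝ) * log (2 * n) ≤ √(2 * n) * log (2 * n) := by
    gcongr
    · exact log_nonneg (by norm_cast; omega)
    · exact_mod_cast nat_sqrt_le_real_sqrt
  have hdiv : ((2 * n / 3 : ℕ) : ℝ) * log 4 ≤ 2 * n / 3 * log 4 := by
    gcongr
    exact Nat.cast_div_le.trans (by norm_cast)
  linarith

end

/-- For every natural number `n > e^7`, the number of primes `q` with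
`n² < q ≤ 2n²` exceeds `n / log n`: that is, `π(2n²) − π(n²) > n / log n`. -/
theorem primeCounting_gap_gt (n : ℕ) (hn : Real.exp 7 < (n : ℝ)) :
    (n : ℝ) / Real.log n <
      ((Nat.primeCounting (2 * n ^ 2) - Nat.primeCounting (n ^ 2) : ℕ) : ℝ) := by
  have hexp : (1024 : ℝ) < Real.exp 7 := by
    rw [show (7 : ℝ) = (7 : ℕ) * 1 by norm_num, Real.exp_nat_mul]
    calc (1024 : ℝ) < 2.7 ^ 7 := by norm_num
      _ < Real.exp 1 ^ 7 := by gcongr; linarith [Real.exp_one_gt_d9]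
  have hn1024 : (1024 : ℝ) ≤ n := by linarith
  have hn4 : 4 ≤ n ^ 2 := by
    have : 1024 ≤ n := by exact_mod_cast hn1024
    nlinarith
  have key := mul_log_four_div_three_lt_log_add_mul_log hn4
  push_cast at key
  rw [div_lt_iff₀ (Real.log_pos (by linarith))]
  exact lt_mul_log_of_sq_mul_log_four_div_three_lt hn1024 (Nat.cast_nonneg _) key
end

section
/- Let T be a tree (a connected acyclic finite simple graph) with vertex v, let v_1, …, v_k be the vertices of T adjacent to v, and for each 1 ≤ i ≤ k let T_i be the connected component of the graph obtained from T by deleting the edge {v, v_i} that contains v_i. Then for every color c ∈ ℕ, the proper colorings κ of T with κ(v) = c are in bijection with k-tuples (κ_1, …, κ_k) where each κ_i is a proper coloring of T_i with κ_i(v_i) ≠ c; moreover this bijection is given by restriction (κ_i = κ restricted to the vertices of T_i), so it preserves the color multiplicities away from v. -/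
/-!
Since every edge of a tree is a bridge, a walk in `T` ending at a neighbour `u` of `v` lies in the
branch `T_u` exactly when it avoids `v`. Hence the branches partition the vertices other than `v`,
and the only edges of `T` leaving a branch `T_u` are the edge `{v, u}`. A coloring of `T` with
`κ v = c` is therefore the same as a family of colorings of the branches, and it is proper iff each
piece is proper and no neighbour `u` of `v` receives the color `c`.
-/

namespace SimpleGraph

variable {V α : Type} {T : SimpleGraph V} {v u u' w x : V}

theorem reachable_deleteEdges_of_notMem_support {a b : V} (p : T.Walk a b) (hv : v ∉ p.support) :
    (T.deleteEdges {s(v, u)}).Reachable a b :=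
  ⟨p.toDeleteEdge _ fun h => hv (p.fst_mem_support_of_mem_edges h)⟩

theorem Connected.exists_adj_mem_branchSet (hT : T.Connected) (hw : w ≠ v) :
    ∃ u, T.Adj v u ∧ w ∈ branchSet T v u := by
  obtain ⟨p, hp⟩ := hT.exists_isPath v w
  cases p with
  | nil => exact absurd rfl hw
  | cons hvu q =>
    refine ⟨_, hvu, reachable_deleteEdges_of_notMem_support q.reverse ?_⟩
    rw [Walk.support_reverse, List.mem_reverse]
    exact ((Walk.cons_isPath_iff _ _).mp hp).2

namespace IsTree

theorem not_reachable_deleteEdges (hT : T.IsTree) (hu : T.Adj v u) :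
    ¬ (T.deleteEdges {s(v, u)}).Reachable v u :=
  isBridge_iff.mp (isAcyclic_iff_forall_adj_isBridge.mp hT.isAcyclic hu)

theorem mem_branchSet_iff (hT : T.IsTree) (hu : T.Adj v u) :
    w ∈ branchSet T v u ↔ ∃ p : T.Walk w u, v ∉ p.support := by
  classical
  refine ⟨fun ⟨p⟩ => ⟨p.mapLe (deleteEdges_le _), fun hv => ?_⟩,
    fun ⟨p, hv⟩ => reachable_deleteEdges_of_notMem_support p hv⟩
  rw [Walk.support_mapLe_eq_support] at hv
  exact hT.not_reachable_deleteEdges hu ⟨p.dropUntil v hv⟩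

theorem ne_of_mem_branchSet (hT : T.IsTree) (hu : T.Adj v u) (hw : w ∈ branchSet T v u) :
    w ≠ v := by
  rintro rfl
  exact hT.not_reachable_deleteEdges hu hw

theorem mem_branchSet_of_adj (hT : T.IsTree) (hu : T.Adj v u) (hw : w ∈ branchSet T v u)
    (hxw : T.Adj x w) (hx : x ≠ v) : x ∈ branchSet T v u := by
  obtain ⟨p, hp⟩ := (hT.mem_branchSet_iff hu).mp hw
  exact (hT.mem_branchSet_iff hu).mpr ⟨.cons hxw p, by simp [Ne.symm hx, hp]⟩

theorem eq_of_mem_branchSet_s14 (hT : T.IsTree) (hu : T.Adj v u) (hu' : T.Adj v u')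
    (hw : w ∈ branchSet T v u) (hw' : w ∈ branchSet T v u') : u = u' := by
  by_contra hne
  obtain ⟨p', hp'⟩ := (hT.mem_branchSet_iff hu').mp hw'
  have hvu' : (T.deleteEdges {s(v, u)}).Adj v u' := by simp [hu', Ne.symm hne, hu'.ne']
  exact hT.not_reachable_deleteEdges hu
    (hvu'.reachable.trans ((reachable_deleteEdges_of_notMem_support p' hp').symm.trans hw))

noncomputable def branchRoot (hT : T.IsTree) (hw : w ≠ v) : T.neighborSet v :=
  ⟨_, (hT.connected.exists_adj_mem_branchSet hw).choose_spec.1⟩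

theorem mem_branchSet_branchRoot (hT : T.IsTree) (hw : w ≠ v) :
    w ∈ branchSet T v (hT.branchRoot hw) :=
  (hT.connected.exists_adj_mem_branchSet hw).choose_spec.2

theorem branchRoot_eq (hT : T.IsTree) (hu : T.Adj v u) (hw : w ∈ branchSet T v u)
    (hwv : w ≠ v) : hT.branchRoot hwv = ⟨u, hu⟩ :=
  Subtype.ext (hT.eq_of_mem_branchSet_s14 (hT.branchRoot hwv).2 hu
    (hT.mem_branchSet_branchRoot hwv) hw)

open Classical in
noncomputable def glueBranches (hT : T.IsTree) (v : V) (c : α)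
    (K : ∀ u : T.neighborSet v, branchSet T v u → α) : V → α :=
  fun w => if hw : w = v then c else K (hT.branchRoot hw) ⟨w, hT.mem_branchSet_branchRoot hw⟩

variable {c : α} {K : ∀ u : T.neighborSet v, branchSet T v u → α}

theorem glueBranches_self (hT : T.IsTree) : hT.glueBranches v c K v = c :=
  dif_pos rfl

theorem glueBranches_of_mem (hT : T.IsTree) (hu : T.Adj v u) (hw : w ∈ branchSet T v u) :
    hT.glueBranches v c K w = K ⟨u, hu⟩ ⟨w, hw⟩ := by
  have hwv := hT.ne_of_mem_branchSet hu hw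
  have congr_root : ∀ (r : T.neighborSet v) (hr : w ∈ branchSet T v r), r = ⟨u, hu⟩ →
      K r ⟨w, hr⟩ = K ⟨u, hu⟩ ⟨w, hw⟩ := by
    rintro _ _ rfl
    rfl
  rw [glueBranches, dif_neg hwv]
  exact congr_root _ _ (hT.branchRoot_eq hu hw hwv)

theorem glueBranches_restrict (hT : T.IsTree) {κ : V → α} (hκ : κ v = c) :
    hT.glueBranches v c (fun _ w => κ w) = κ := by
  funext w
  by_cases hw : w = v
  · subst hw
    rw [glueBranches_self, hκ]
  · exact hT.glueBranches_of_mem (hT.branchRoot hw).2 (hT.mem_branchSet_branchRoot hw)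

theorem isProperNatColoring_glueBranches (hT : T.IsTree) {c : ℕ}
    {K : ∀ u : T.neighborSet v, branchSet T v u → ℕ}
    (hK : ∀ u : T.neighborSet v, (T.induce (branchSet T v u)).IsProperNatColoring (K u))
    (hKc : ∀ u : T.neighborSet v, K u ⟨u, Reachable.refl (u : V)⟩ ≠ c) :
    T.IsProperNatColoring (hT.glueBranches v c K) := by
  intro a b hab
  by_cases ha : a = v
  · subst ha
    rw [glueBranches_self, hT.glueBranches_of_mem hab (Reachable.refl b)]
    exact (hKc ⟨b, hab⟩).symm
  by_cases hb : b = v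
  · subst hb
    rw [hT.glueBranches_of_mem hab.symm (Reachable.refl a), glueBranches_self]
    exact hKc ⟨a, hab.symm⟩
  set r := hT.branchRoot ha
  have ha' : a ∈ branchSet T v r := hT.mem_branchSet_branchRoot ha
  have hb' : b ∈ branchSet T v r := hT.mem_branchSet_of_adj r.2 ha' hab.symm hb
  rw [hT.glueBranches_of_mem r.2 ha', hT.glueBranches_of_mem r.2 hb']
  exact hK r (show (T.induce _).Adj ⟨a, ha'⟩ ⟨b, hb'⟩ from hab)

end IsTree

end SimpleGraph

/-- For a tree `T` with vertex `v` and color `c`, the proper colorings `κ`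
of `T` with `κ v = c` are in bijection with tuples, indexed by the neighbors `u` of `v`,
of proper colorings of the branch `T_u` (the component of `T − {v,u}` containing `u`)
giving `u` a color other than `c`; moreover the bijection is given by restriction. -/
theorem colorings_equiv_branch_colorings {V : Type}
    (T : SimpleGraph V) (hT : T.IsTree) (v : V) (c : ℕ) :
    ∃ e : {κ : V → ℕ // T.IsProperNatColoring κ ∧ κ v = c} ≃
        (∀ u : T.neighborSet v,
          {κ : ↥(branchSet T v (u : V)) → ℕ //
            (SimpleGraph.induce (branchSet T v (u : V)) T).IsProperNatColoring κ ∧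
            κ ⟨(u : V), by exact SimpleGraph.Reachable.refl (u : V)⟩ ≠ c}),
      ∀ (κ : {κ : V → ℕ // T.IsProperNatColoring κ ∧ κ v = c})
        (u : T.neighborSet v) (w : ↥(branchSet T v (u : V))),
          (e κ u).val w = κ.val (w : V) :=
  ⟨{ toFun := fun κ u =>
        ⟨fun w => κ.1 w, fun _ _ hab => κ.2.1 hab, fun h => κ.2.1 u.2 (κ.2.2.trans h.symm)⟩
     invFun := fun K =>
        ⟨hT.glueBranches v c fun u => (K u).1,
          hT.isProperNatColoring_glueBranches (fun u => (K u).2.1) (fun u => (K u).2.2),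
          hT.glueBranches_self⟩
     left_inv := fun κ => Subtype.ext (hT.glueBranches_restrict κ.2.2)
     right_inv := fun K => funext fun u => Subtype.ext <| funext fun w =>
        hT.glueBranches_of_mem (K := fun u => (K u).1) u.2 w.2 },
    fun _ _ _ => rfl⟩
end
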